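/- Let k ≥ 1 and suppose b_0, ..., b_{2k+1} ∈ C^2 are unit vectors with pairwise distinct orthogonal-complement lines, and let b_j^⊥ denote a unit vector orthogonal to b_j. Define for 0 ≤ j ≤ k: v_{2j} = b_j ⊗ b_{2j}^⊥, v_{2j+1} = b_j^⊥ ⊗ b_{(2j+2) mod (2k+2)}, w_{2j} = b_j^⊥ ⊗ b_{2j+1}^⊥, w_{2j+1} = b_j ⊗ b_{(2j+3) mod (2k+2)}. Assume additionally that |⟨b_i, b_j⟩|, |⟨b_i, b_j^⊥⟩|, |⟨b_i^⊥, b_j^⊥⟩| are not in {0, 1} for i ≠ j. Then the orthogonality graph of {v_0, ..., v_{2k+1}, w_0, ..., w_{2k+1}} ⊆ C^2 ⊗ C^2 is exactly the prism graph Y_{4k+4}: v_i ⊥ v_j and w_i ⊥ w_j iff j - i ≡ ±1 (mod 2k+2), and v_i ⊥ w_j iff i = j. -/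

import Mathlib

/-!
Since `⟪a ⊗ b, c ⊗ d⟫ = ⟪a, c⟫ ⟪b, d⟫`, two pure tensors are orthogonal iff one pair of
corresponding factors is. By the genericity assumptions, two vectors among
`b₀, b₀^⊥, …, b_{2k+1}, b_{2k+1}^⊥` are orthogonal exactly when they are `b_j` and `b_j^⊥` for
the same `j`. Labelling `b_j` by `(true, j)` and `b_j^⊥` by `(false, j)`, the orthogonality
graph of the `v_i, w_i` is therefore determined by the labels of their tensor factors, and
comparing those labels is arithmetic modulo `2k + 2`.
-/

/-- The tensor product of two vectors of `ℂ²`, realized in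
`EuclideanSpace ℂ (Fin 2 × Fin 2) ≅ ℂ² ⊗ ℂ²`. -/
noncomputable def tens2 (a b : EuclideanSpace ℂ (Fin 2)) :
    EuclideanSpace ℂ (Fin 2 × Fin 2) :=
  WithLp.toLp 2 (fun x : Fin 2 × Fin 2 => a x.1 * b x.2)

lemma inner_tens2 (a b c d : EuclideanSpace ℂ (Fin 2)) :
    (inner ℂ (tens2 a b) (tens2 c d) : ℂ) = (inner ℂ a c : ℂ) * inner ℂ b d := by
  simp only [tens2, PiLp.inner_apply, RCLike.inner_apply, map_mul,
    Fintype.sum_prod_type, Finset.sum_mul_sum]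
  exact Finset.sum_congr rfl fun i _ => Finset.sum_congr rfl fun j _ => by ring

section Frame

variable {𝕜 E ι : Type*} [RCLike 𝕜] [NormedAddCommGroup E] [InnerProductSpace 𝕜 E]

def frameVec (b bp : ι → E) (x : Bool × ι) : E := if x.1 then b x.2 else bp x.2

def Complementary (x y : Bool × ι) : Prop := x.1 ≠ y.1 ∧ x.2 = y.2

variable {b bp : ι → E}

lemma inner_frameVec_eq_zero_iff (hb : ∀ i, b i ≠ 0) (hbp : ∀ i, bp i ≠ 0)
    (hperp : ∀ i, inner 𝕜 (b i) (bp i) = 0)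
    (hbb : ∀ i j, i ≠ j → inner 𝕜 (b i) (b j) ≠ 0)
    (hbbp : ∀ i j, i ≠ j → inner 𝕜 (b i) (bp j) ≠ 0)
    (hbpbp : ∀ i j, i ≠ j → inner 𝕜 (bp i) (bp j) ≠ 0) (x y : Bool × ι) :
    inner 𝕜 (frameVec b bp x) (frameVec b bp y) = 0 ↔ Complementary x y := by
  obtain ⟨s, i⟩ := x
  obtain ⟨t, j⟩ := y
  by_cases hij : i = j
  · subst hij
    cases s <;> cases t <;>
      simp [frameVec, Complementary, hb, hbp, hperp, inner_eq_zero_symm.mp (hperp i)]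
  · have hbpb : inner 𝕜 (bp i) (b j) ≠ 0 :=
      fun h => hbbp j i (Ne.symm hij) (inner_eq_zero_symm.mp h)
    cases s <;> cases t <;>
      simp [frameVec, Complementary, hij, hbb i j hij, hbpbp i j hij, hbbp i j hij, hbpb]

end Frame

lemma Nat.mod_eq_ite_of_lt_two_mul {x n : ℕ} (h : x < 2 * n) :
    x % n = if x < n then x else x - n := by
  split_ifs with hx
  · exact Nat.mod_eq_of_lt hx
  · rw [Nat.mod_eq_sub_mod (not_lt.mp hx), Nat.mod_eq_of_lt (by omega)]

lemma Fin.funext_even_odd {α : Type*} {n : ℕ} {f g : Fin n → α}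
    (h0 : ∀ j (hj : 2 * j < n), f ⟨2 * j, hj⟩ = g ⟨2 * j, hj⟩)
    (h1 : ∀ j (hj : 2 * j + 1 < n), f ⟨2 * j + 1, hj⟩ = g ⟨2 * j + 1, hj⟩) : f = g := by
  funext ⟨i, hi⟩
  obtain ⟨j, rfl | rfl⟩ := Nat.even_or_odd' i
  · exact h0 j hi
  · exact h1 j hi

section Labels

variable (k : ℕ)

def CyclicAdj (i j : Fin (2 * k + 2)) : Prop :=
  (j.val + (2 * k + 2) - i.val) % (2 * k + 2) = 1 ∨
    (i.val + (2 * k + 2) - j.val) % (2 * k + 2) = 1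

/- Labels of the two tensor factors in the paper's definition of `v_i` and `w_i`: for instance
`v_{2j+1} = b_j^⊥ ⊗ b_{2j+2}` is `frameVec b bp (vFst k i) ⊗ frameVec b bp (vSnd k i)` with
`i = 2j + 1`. -/
def vFst (i : Fin (2 * k + 2)) : Bool × Fin (2 * k + 2) :=
  (decide (i.val % 2 = 0), ⟨i / 2, by omega⟩)

def vSnd (i : Fin (2 * k + 2)) : Bool × Fin (2 * k + 2) :=
  if i.val % 2 = 0 then (false, i)
  else (true, ⟨(i + 1) % (2 * k + 2), Nat.mod_lt _ (Nat.zero_lt_succ _)⟩)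

def wFst (i : Fin (2 * k + 2)) : Bool × Fin (2 * k + 2) :=
  (decide (i.val % 2 = 1), ⟨i / 2, by omega⟩)

def wSnd (i : Fin (2 * k + 2)) : Bool × Fin (2 * k + 2) :=
  if h : i.val % 2 = 0 then (false, ⟨i + 1, by omega⟩)
  else (true, ⟨(i + 2) % (2 * k + 2), Nat.mod_lt _ (Nat.zero_lt_succ _)⟩)

variable {k}

lemma complementary_vFst_or_vSnd_iff (i j : Fin (2 * k + 2)) :
    Complementary (vFst k i) (vFst k j) ∨ Complementary (vSnd k i) (vSnd k j) ↔
      CyclicAdj k i j := by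
  obtain ⟨i, hi⟩ := i
  obtain ⟨j, hj⟩ := j
  simp only [Complementary, vFst, vSnd, CyclicAdj, Fin.ext_iff]
  simp (disch := omega) only [Nat.mod_eq_ite_of_lt_two_mul]
  grind

lemma complementary_wFst_or_wSnd_iff (i j : Fin (2 * k + 2)) :
    Complementary (wFst k i) (wFst k j) ∨ Complementary (wSnd k i) (wSnd k j) ↔
      CyclicAdj k i j := by
  obtain ⟨i, hi⟩ := i
  obtain ⟨j, hj⟩ := j
  simp only [Complementary, wFst, wSnd, CyclicAdj, Fin.ext_iff]
  simp (disch := omega) only [Nat.mod_eq_ite_of_lt_two_mul]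
  grind

lemma complementary_vFst_wFst_or_vSnd_wSnd_iff (i j : Fin (2 * k + 2)) :
    Complementary (vFst k i) (wFst k j) ∨ Complementary (vSnd k i) (wSnd k j) ↔ i = j := by
  obtain ⟨i, hi⟩ := i
  obtain ⟨j, hj⟩ := j
  simp only [Complementary, vFst, vSnd, wFst, wSnd, Fin.ext_iff]
  simp (disch := omega) only [Nat.mod_eq_ite_of_lt_two_mul]
  grind

end Labels

theorem stmt11 (k : ℕ)
    (b bp : Fin (2 * k + 2) → EuclideanSpace ℂ (Fin 2))
    (hbnorm : ∀ j, ‖b j‖ = 1) (hbpnorm : ∀ j, ‖bp j‖ = 1)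
    (hperp : ∀ j, (inner ℂ (b j) (bp j) : ℂ) = 0)
    (hdist : ∀ i j, i ≠ j →
      ‖(inner ℂ (b i) (b j) : ℂ)‖ ∉ ({0, 1} : Set ℝ) ∧
      ‖(inner ℂ (b i) (bp j) : ℂ)‖ ∉ ({0, 1} : Set ℝ) ∧
      ‖(inner ℂ (bp i) (bp j) : ℂ)‖ ∉ ({0, 1} : Set ℝ))
    (v w : Fin (2 * k + 2) → EuclideanSpace ℂ (Fin 2 × Fin 2))
    (hv0 : ∀ j : ℕ, ∀ hj : j ≤ k, v ⟨2 * j, by omega⟩ =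
      tens2 (b ⟨j, by omega⟩) (bp ⟨2 * j, by omega⟩))
    (hv1 : ∀ j : ℕ, ∀ hj : j ≤ k, v ⟨2 * j + 1, by omega⟩ =
      tens2 (bp ⟨j, by omega⟩)
        (b ⟨(2 * j + 2) % (2 * k + 2), Nat.mod_lt _ (by omega)⟩))
    (hw0 : ∀ j : ℕ, ∀ hj : j ≤ k, w ⟨2 * j, by omega⟩ =
      tens2 (bp ⟨j, by omega⟩) (bp ⟨2 * j + 1, by omega⟩))
    (hw1 : ∀ j : ℕ, ∀ hj : j ≤ k, w ⟨2 * j + 1, by omega⟩ =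
      tens2 (b ⟨j, by omega⟩)
        (b ⟨(2 * j + 3) % (2 * k + 2), Nat.mod_lt _ (by omega)⟩)) :
    (∀ i j : Fin (2 * k + 2),
      ((inner ℂ (v i) (v j) : ℂ) = 0 ↔
        (j.val + (2 * k + 2) - i.val) % (2 * k + 2) = 1 ∨
        (i.val + (2 * k + 2) - j.val) % (2 * k + 2) = 1)) ∧
    (∀ i j : Fin (2 * k + 2),
      ((inner ℂ (w i) (w j) : ℂ) = 0 ↔
        (j.val + (2 * k + 2) - i.val) % (2 * k + 2) = 1 ∨
        (i.val + (2 * k + 2) - j.val) % (2 * k + 2) = 1)) ∧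
    (∀ i j : Fin (2 * k + 2), ((inner ℂ (v i) (w j) : ℂ) = 0 ↔ i = j)) := by
  set e := frameVec b bp
  have hv : ∀ i, v i = tens2 (e (vFst k i)) (e (vSnd k i)) := by
    refine congrFun (Fin.funext_even_odd (fun j hj => ?_) (fun j hj => ?_))
    · simp [hv0 j (by omega), e, frameVec, vFst, vSnd]
    · simp [hv1 j (by omega), e, frameVec, vFst, vSnd, show (2 * j + 1) / 2 = j by omega]
  have hw : ∀ i, w i = tens2 (e (wFst k i)) (e (wSnd k i)) := by
    refine congrFun (Fin.funext_even_odd (fun j hj => ?_) (fun j hj => ?_))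
    · simp [hw0 j (by omega), e, frameVec, wFst, wSnd]
    · simp [hw1 j (by omega), e, frameVec, wFst, wSnd, show (2 * j + 1) / 2 = j by omega]
  have he : ∀ x y, inner ℂ (e x) (e y) = 0 ↔ Complementary x y := by
    refine inner_frameVec_eq_zero_iff (fun i => ?_) (fun i => ?_) hperp
      (fun i j hij h => (hdist i j hij).1 (by simp [h]))
      (fun i j hij h => (hdist i j hij).2.1 (by simp [h]))
      (fun i j hij h => (hdist i j hij).2.2 (by simp [h]))
    · exact norm_ne_zero_iff.mp (by simp [hbnorm])
    · exact norm_ne_zero_iff.mp (by simp [hbpnorm])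
  refine ⟨fun i j => ?_, fun i j => ?_, fun i j => ?_⟩
  · rw [hv, hv, inner_tens2, mul_eq_zero, he, he]
    exact complementary_vFst_or_vSnd_iff i j
  · rw [hw, hw, inner_tens2, mul_eq_zero, he, he]
    exact complementary_wFst_or_wSnd_iff i j
  · rw [hv, hw, inner_tens2, mul_eq_zero, he, he]
    exact complementary_vFst_wFst_or_vSnd_wSnd_iff i j
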